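/- For every θ ∈ (0,1) and every set F ⊆ ℝ^d, the upper spectrum satisfies \overline{dim}_GB F ≤ \overline{dim}_A^θ F ≤ min{ \overline{dim}_GB F / (1−θ), dim_qA F }. -/

import Mathlib

open Filter Metric Set Topology Bornology ENNReal

noncomputable section

variable {X : Type*} [PseudoMetricSpace X]

/-- `coveringNumber r E` is the smallest number of closed balls of radius `r`
needed to cover `E` (with value `⊤` if no finite cover exists). -/
def coveringNumber (r : ℝ) (E : Set X) : ℕ∞ :=
  sInf {n : ℕ∞ | ∃ t : Finset X, (E ⊆ ⋃ x ∈ t, closedBall x r) ∧ (t.card : ℕ∞) = n}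

/-- The Assouad spectrum `dim_A^θ F`. -/
def assouadSpectrum (θ : ℝ) (F : Set X) : ℝ :=
  sInf {s : ℝ | 0 ≤ s ∧ ∃ C > (0 : ℝ), ∀ R : ℝ, 0 < R → R < 1 → ∀ x ∈ F,
    (coveringNumber (R ^ (1 / θ)) (closedBall x R ∩ F) : ℝ≥0∞)
      ≤ ENNReal.ofReal (C * (R / R ^ (1 / θ)) ^ s)}

/-- The upper spectrum `\overline{dim}_A^θ F`. -/
def upperSpectrum (θ : ℝ) (F : Set X) : ℝ :=
  sInf {s : ℝ | 0 ≤ s ∧ ∃ C > (0 : ℝ), ∀ r R : ℝ, 0 < r → r ≤ R ^ (1 / θ) →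
    R ^ (1 / θ) < R → R < 1 → 0 < R → ∀ x ∈ F,
    (coveringNumber r (closedBall x R ∩ F) : ℝ≥0∞) ≤ ENNReal.ofReal (C * (R / r) ^ s)}

/-- The generalized upper box dimension `\overline{dim}_{GB} F := limsup_{θ → 0⁺} dim_A^θ F`. -/
def genUpperBoxDim (F : Set X) : ℝ :=
  limsup (fun θ : ℝ => assouadSpectrum θ F) (𝓝[>] (0 : ℝ))

/-- The quasi-Assouad dimension `dim_{qA} F := lim_{θ → 1⁻} \overline{dim}_A^θ F`
(the limit exists by monotonicity, hence equals the limsup). -/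
def quasiAssouadDim (F : Set X) : ℝ :=
  limsup (fun θ : ℝ => upperSpectrum θ F) (𝓝[<] (1 : ℝ))

/-- The upper box dimension `\overline{dim}_B F := limsup_{δ → 0⁺} log N_δ(F) / (- log δ)`. -/
def upperBoxDim (F : Set X) : ℝ :=
  limsup (fun δ : ℝ => Real.log ((coveringNumber δ F).toNat : ℝ) / (- Real.log δ))
    (𝓝[>] (0 : ℝ))

/-- The Assouad dimension `dim_A F`. -/
def assouadDim (F : Set X) : ℝ :=
  sInf {s : ℝ | 0 ≤ s ∧ ∃ C > (0 : ℝ), ∃ ρ > (0 : ℝ), ∀ r R : ℝ, 0 < r → r < R → R < ρ →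
    ∀ x ∈ F, (coveringNumber r (closedBall x R ∩ F) : ℝ≥0∞) ≤ ENNReal.ofReal (C * (R / r) ^ s)}

/-- The packing pre-measure at scale `δ`: the supremum of `∑ |B_i|^s` over at most countable
collections of disjoint closed balls of radii at most `δ` (and positive) with centres in `F`,
where `|B_i| = 2 r_i` is the diameter. -/
def packingPre (s δ : ℝ) (F : Set X) : ℝ≥0∞ :=
  ⨆ (D : Set (X × ℝ)) (_ : D.Countable)
    (_ : ∀ p ∈ D, p.1 ∈ F ∧ 0 < p.2 ∧ p.2 ≤ δ)
    (_ : D.Pairwise fun p q => Disjoint (closedBall p.1 p.2) (closedBall q.1 q.2)),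
    ∑' p : D, ENNReal.ofReal ((2 * (p : X × ℝ).2) ^ s)

/-- `𝒫₀^s(F) := lim_{δ → 0} 𝒫_δ^s(F)`; the limit exists by monotonicity and equals the inf. -/
def packingPre₀ (s : ℝ) (F : Set X) : ℝ≥0∞ :=
  ⨅ (δ : ℝ) (_ : 0 < δ), packingPre s δ F

/-- The packing (outer) measure `𝒫^s(F)`. -/
def packingMeasure (s : ℝ) (F : Set X) : ℝ≥0∞ :=
  ⨅ (G : ℕ → Set X) (_ : F ⊆ ⋃ i, G i), ∑' i, packingPre₀ s (G i)

/-- The packing dimension `dim_P F = inf {s ≥ 0 : 𝒫^s(F) = 0}`. -/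
def packingDim (F : Set X) : ℝ :=
  sInf {s : ℝ | 0 ≤ s ∧ packingMeasure s F = 0}

/-!
The lower bound and the bound by `dim_qA F` are monotonicity of the spectra in `θ`.

For the bound by `dim_GB F / (1 - θ)`, fix `θ' ∈ (0,1)` and an exponent `s` admissible for
`dim_A^θ' F`. Covering `B(x,1) ∩ F` by `σ`-balls costs at most `C σ^{-(1-θ')s}` times the cost
at scale `σ^θ'`: cover by `σ^θ'`-balls, halve them (a doubling constant of `ℝ^d`), recentre
them in `F`, and apply the spectrum bound to each. For small `σ` the constant is absorbed into
`σ^{-δ}`, and iterating from a fixed scale gives `N_σ(B(x,1) ∩ F) ≲ σ^{-(s+δ)}` uniformly in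
`x ∈ F`. As `r ≤ R^{1/θ}` forces `r⁻¹ ≤ (R/r)^{1/(1-θ)}`, this bounds the
upper spectrum at `θ` by `dim_A^θ' F / (1 - θ)` for every `θ'`; now let `θ' → 0`.
-/

open MeasureTheory Module

section CoveringNumber

variable {X : Type*} [PseudoMetricSpace X] {r ρ σ : ℝ} {A B F : Set X}

lemma coveringNumber_le_card {t : Finset X} (h : A ⊆ ⋃ x ∈ t, closedBall x r) :
    coveringNumber r A ≤ t.card :=
  sInf_le ⟨t, h, rfl⟩

lemma exists_finset_card_eq_coveringNumber (h : coveringNumber r A ≠ ⊤) :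
    ∃ t : Finset X, A ⊆ ⋃ x ∈ t, closedBall x r ∧ (t.card : ℕ∞) = coveringNumber r A :=
  have ⟨n, hn, _⟩ := not_forall₂.1 (mt sInf_eq_top.2 h)
  csInf_mem ⟨n, hn⟩

lemma coveringNumber_mono (h : A ⊆ B) : coveringNumber r A ≤ coveringNumber r B :=
  sInf_le_sInf fun _ ⟨t, ht, hn⟩ => ⟨t, h.trans ht, hn⟩

lemma coveringNumber_union_le :
    coveringNumber r (A ∪ B) ≤ coveringNumber r A + coveringNumber r B := by
  classical
  rcases eq_or_ne (coveringNumber r A) ⊤ with hA | hA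
  · simp [hA]
  rcases eq_or_ne (coveringNumber r B) ⊤ with hB | hB
  · simp [hB]
  obtain ⟨s, hs, hsA⟩ := exists_finset_card_eq_coveringNumber hA
  obtain ⟨t, ht, htB⟩ := exists_finset_card_eq_coveringNumber hB
  calc coveringNumber r (A ∪ B) ≤ (s ∪ t).card :=
        coveringNumber_le_card (by rw [Finset.set_biUnion_union]; exact union_subset_union hs ht)
    _ ≤ s.card + t.card := by exact_mod_cast Finset.card_union_le s t
    _ = coveringNumber r A + coveringNumber r B := by rw [hsA, htB]

lemma coveringNumber_biUnion_le {ι : Type*} (s : Finset ι) (A : ι → Set X) :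
    coveringNumber r (⋃ i ∈ s, A i) ≤ ∑ i ∈ s, coveringNumber r (A i) := by
  classical
  induction s using Finset.induction_on with
  | empty => simpa using coveringNumber_le_card (r := r) (A := ∅) (t := ∅) (empty_subset _)
  | insert i s hi ih =>
    rw [Finset.set_biUnion_insert, Finset.sum_insert hi]
    exact coveringNumber_union_le.trans (add_le_add_right ih _)

lemma coveringNumber_le_card_mul {t : Finset X} {M : ℝ≥0∞}
    (ht : A ⊆ ⋃ y ∈ t, closedBall y ρ)
    (hM : ∀ y ∈ t, (coveringNumber σ (closedBall y ρ ∩ A) : ℝ≥0∞) ≤ M) :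
    (coveringNumber σ A : ℝ≥0∞) ≤ t.card * M := by
  have hA : A ⊆ ⋃ y ∈ t, closedBall y ρ ∩ A := fun a ha => by
    obtain ⟨y, hy, hay⟩ := mem_iUnion₂.1 (ht ha)
    exact mem_iUnion₂.2 ⟨y, hy, hay, ha⟩
  calc (coveringNumber σ A : ℝ≥0∞)
      ≤ ((∑ y ∈ t, coveringNumber σ (closedBall y ρ ∩ A) : ℕ∞) : ℝ≥0∞) :=
        ENat.toENNReal_le.2 ((coveringNumber_mono hA).trans (coveringNumber_biUnion_le _ _))
    _ = ∑ y ∈ t, (coveringNumber σ (closedBall y ρ ∩ A) : ℝ≥0∞) :=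
        map_sum ENat.toENNRealRingHom _ _
    _ ≤ ∑ _y ∈ t, M := Finset.sum_le_sum hM
    _ = t.card * M := by rw [Finset.sum_const, nsmul_eq_mul]

/-- A `ρ`-ball meeting `A ⊆ F` at `z` has its trace on `A` inside `closedBall z (2 * ρ) ∩ F`. -/
lemma coveringNumber_le_card_mul_of_subset (hAF : A ⊆ F) {t : Finset X} {M : ℝ≥0∞}
    (ht : A ⊆ ⋃ y ∈ t, closedBall y ρ)
    (hM : ∀ z ∈ F, (coveringNumber σ (closedBall z (2 * ρ) ∩ F) : ℝ≥0∞) ≤ M) :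
    (coveringNumber σ A : ℝ≥0∞) ≤ t.card * M := by
  refine coveringNumber_le_card_mul ht fun y _ => ?_
  rcases (closedBall y ρ ∩ A).eq_empty_or_nonempty with h | ⟨z, hzy, hzA⟩
  · rw [h]
    exact (ENat.toENNReal_le.2 (coveringNumber_le_card (t := ∅) (by simp))).trans (by simp)
  refine (ENat.toENNReal_le.2 (coveringNumber_mono ?_)).trans (hM z (hAF hzA))
  rintro w ⟨hwy, hwA⟩
  refine ⟨?_, hAF hwA⟩
  rw [mem_closedBall] at *
  linarith [dist_triangle w y z, dist_comm z y]

end CoveringNumber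

section FiniteDimensional

variable {E : Type*} [NormedAddCommGroup E] [NormedSpace ℝ E] [FiniteDimensional ℝ E]

lemma card_le_of_pairwise_lt_dist {S : Finset E} {x : E} {r R : ℝ} (hr : 0 < r) (hR : 0 ≤ R)
    (hS : ↑S ⊆ closedBall x R) (hsep : (S : Set E).Pairwise fun a b => r < dist a b) :
    (S.card : ℝ) ≤ (2 * R / r + 1) ^ finrank ℝ E := by
  borelize E
  set μ : Measure E := Measure.addHaar
  have hdisj : (S : Set E).PairwiseDisjoint fun a => closedBall a (r / 2) :=
    fun a ha b hb hab => closedBall_disjoint_closedBall (by linarith [hsep ha hb hab])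
  have hsub : ⋃ a ∈ S, closedBall a (r / 2) ⊆ closedBall x (R + r / 2) := by
    refine iUnion₂_subset fun a ha => closedBall_subset_closedBall' ?_
    linarith [mem_closedBall.1 (hS ha)]
  have hvol : (S.card : ℝ≥0∞) * ENNReal.ofReal ((r / 2) ^ finrank ℝ E)
      ≤ ENNReal.ofReal ((R + r / 2) ^ finrank ℝ E) := by
    rw [← ENNReal.mul_le_mul_iff_left (measure_ball_pos μ 0 one_pos).ne' measure_ball_lt_top.ne]
    calc (S.card : ℝ≥0∞) * ENNReal.ofReal ((r / 2) ^ finrank ℝ E) * μ (ball 0 1)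
        = ∑ a ∈ S, μ (closedBall a (r / 2)) := by
          simp [μ.addHaar_closedBall _ (by positivity : 0 ≤ r / 2), mul_assoc]
      _ = μ (⋃ a ∈ S, closedBall a (r / 2)) :=
          (measure_biUnion_finset hdisj fun _ _ => measurableSet_closedBall).symm
      _ ≤ μ (closedBall x (R + r / 2)) := measure_mono hsub
      _ = ENNReal.ofReal ((R + r / 2) ^ finrank ℝ E) * μ (ball 0 1) :=
          μ.addHaar_closedBall _ (by positivity)
  rw [← ENNReal.ofReal_natCast, ← ENNReal.ofReal_mul (by positivity),
    ENNReal.ofReal_le_ofReal_iff (by positivity), ← le_div_iff₀ (by positivity), ← div_pow] at hvol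
  refine hvol.trans_eq (congrArg (· ^ finrank ℝ E) ?_)
  field_simp

/-- A maximal `r`-separated subset of the ball is an `r`-net of it. -/
lemma coveringNumber_closedBall_le (x : E) {r R : ℝ} (hr : 0 < r) (hR : 0 ≤ R) :
    (coveringNumber r (closedBall x R) : ℝ≥0∞)
      ≤ ENNReal.ofReal ((2 * R / r + 1) ^ finrank ℝ E) := by
  classical
  set P : Set ℕ := {n | ∃ S : Finset E, ↑S ⊆ closedBall x R ∧
    (S : Set E).Pairwise (fun a b => r < dist a b) ∧ S.card = n}
  have hP : BddAbove P := ⟨⌊(2 * R / r + 1) ^ finrank ℝ E⌋₊, by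
    rintro _ ⟨S, hS, hsep, rfl⟩
    exact Nat.le_floor (card_le_of_pairwise_lt_dist hr hR hS hsep)⟩
  obtain ⟨S, hS, hsep, hcard⟩ := Nat.sSup_mem (s := P) ⟨0, ∅, by simp, by simp, rfl⟩ hP
  have hcover : closedBall x R ⊆ ⋃ a ∈ S, closedBall a r := by
    intro y hy
    by_contra hy'
    have hfar : ∀ a ∈ S, r < dist y a := fun a ha =>
      lt_of_not_ge fun h => hy' (mem_iUnion₂.2 ⟨a, ha, h⟩)
    have hyS : y ∉ S := fun h => by simpa [hr.not_gt] using hfar y h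
    have hmem : S.card + 1 ∈ P := by
      refine ⟨insert y S, ?_, ?_, Finset.card_insert_of_notMem hyS⟩
      · rw [Finset.coe_insert]; exact insert_subset hy hS
      · rw [Finset.coe_insert, pairwise_insert]
        exact ⟨hsep, fun a ha _ => ⟨hfar a ha, dist_comm y a ▸ hfar a ha⟩⟩
    have := le_csSup hP hmem
    omega
  calc (coveringNumber r (closedBall x R) : ℝ≥0∞) ≤ ((S.card : ℕ∞) : ℝ≥0∞) :=
        ENat.toENNReal_le.2 (coveringNumber_le_card hcover)
    _ = ENNReal.ofReal S.card := by simp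
    _ ≤ _ := ENNReal.ofReal_le_ofReal (card_le_of_pairwise_lt_dist hr hR hS hsep)

lemma coveringNumber_closedBall_le_rpow (x : E) {r R : ℝ} (hr : 0 < r) (hrR : r ≤ R) :
    (coveringNumber r (closedBall x R) : ℝ≥0∞)
      ≤ ENNReal.ofReal (3 ^ finrank ℝ E * (R / r) ^ (finrank ℝ E : ℝ)) := by
  refine (coveringNumber_closedBall_le x hr (hr.le.trans hrR)).trans (ENNReal.ofReal_le_ofReal ?_)
  have : 1 ≤ R / r := (one_le_div hr).2 hrR
  rw [Real.rpow_natCast, ← mul_pow, mul_div_assoc]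
  gcongr
  linarith

lemma coveringNumber_ne_top {A : Set E} (hA : IsBounded A) {r : ℝ} (hr : 0 < r) :
    coveringNumber r A ≠ ⊤ := by
  obtain ⟨R, hR, hAR⟩ := hA.subset_closedBall_lt 0 0
  refine ne_top_of_le_ne_top ?_ (coveringNumber_mono hAR)
  rw [← ENat.toENNReal_ne_top]
  exact ne_top_of_le_ne_top ENNReal.ofReal_ne_top (coveringNumber_closedBall_le 0 hr hR.le)

lemma coveringNumber_half_le (A : Set E) {r : ℝ} (hr : 0 < r) :
    (coveringNumber (r / 2) A : ℝ≥0∞) ≤ 5 ^ finrank ℝ E * coveringNumber r A := by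
  rcases eq_or_ne (coveringNumber r A) ⊤ with h | h
  · simp [h]
  obtain ⟨t, ht, hcard⟩ := exists_finset_card_eq_coveringNumber h
  rw [← hcard, mul_comm]
  refine coveringNumber_le_card_mul ht fun y _ =>
    (ENat.toENNReal_le.2 (coveringNumber_mono inter_subset_left)).trans ?_
  refine (coveringNumber_closedBall_le y (half_pos hr) hr.le).trans_eq ?_
  rw [show 2 * r / (r / 2) + 1 = 5 by field_simp; norm_num]
  simp

end FiniteDimensional

section Iteration

open Real

lemma le_ofReal_mul_rpow_of_le_rpow_mul_comp {L : ℝ → ℝ≥0∞} {θ c p A : ℝ} (hθ0 : 0 < θ)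
    (hθ1 : θ < 1) (hc0 : 0 < c) (hc1 : c < 1) (hp : 0 ≤ p) (hA : 0 ≤ A)
    (hbase : ∀ σ, c ≤ σ → σ < 1 → L σ ≤ ENNReal.ofReal A)
    (hstep : ∀ σ, 0 < σ → σ < c → L σ ≤ ENNReal.ofReal (σ ^ (-p)) * L (σ ^ θ)) :
    ∀ σ, 0 < σ → σ < 1 → L σ ≤ ENNReal.ofReal (A * σ ^ (-(p / (1 - θ)))) := by
  set t := p / (1 - θ)
  have ht : 0 ≤ t := div_nonneg hp (sub_pos.2 hθ1).le
  have hpt : p + θ * t = t := by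
    simp only [t]
    field_simp [(sub_pos.2 hθ1).ne']
    ring
  have hbase' : ∀ σ, c ≤ σ → σ < 1 → L σ ≤ ENNReal.ofReal (A * σ ^ (-t)) := fun σ hcσ hσ1 =>
    (hbase σ hcσ hσ1).trans <| ENNReal.ofReal_le_ofReal <| le_mul_of_one_le_right hA <|
      one_le_rpow_of_pos_of_le_one_of_nonpos (hc0.trans_le hcσ) hσ1.le (neg_nonpos.2 ht)
  suffices h : ∀ n : ℕ, ∀ σ, c ^ (θ⁻¹ ^ n) ≤ σ → σ < 1 → L σ ≤ ENNReal.ofReal (A * σ ^ (-t)) by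
    intro σ hσ0 hσ1
    obtain ⟨n, hn⟩ := (((tendsto_rpow_atTop_of_base_lt_one c (by linarith) hc1).comp
      (tendsto_pow_atTop_atTop_of_one_lt (one_lt_inv₀ hθ0 |>.2 hθ1))).eventually
      (gt_mem_nhds hσ0)).exists
    exact h n σ hn.le hσ1
  intro n
  induction n with
  | zero => simpa using hbase'
  | succ n ih =>
    intro σ hσ hσ1
    have hσ0 : 0 < σ := (rpow_pos_of_pos hc0 _).trans_le hσ
    rcases le_or_gt c σ with hcσ | hσc
    · exact hbase' σ hcσ hσ1
    have hσθ : c ^ (θ⁻¹ ^ n) ≤ σ ^ θ := calc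
      c ^ (θ⁻¹ ^ n) = (c ^ (θ⁻¹ ^ (n + 1))) ^ θ := by
        rw [← rpow_mul hc0.le, pow_succ, mul_assoc, inv_mul_cancel₀ hθ0.ne', mul_one]
      _ ≤ σ ^ θ := rpow_le_rpow (by positivity) hσ hθ0.le
    calc L σ ≤ ENNReal.ofReal (σ ^ (-p)) * L (σ ^ θ) := hstep σ hσ0 hσc
      _ ≤ ENNReal.ofReal (σ ^ (-p)) * ENNReal.ofReal (A * (σ ^ θ) ^ (-t)) :=
          by gcongr; exact ih _ hσθ (rpow_lt_one hσ0.le hσ1 hθ0)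
      _ = ENNReal.ofReal (A * σ ^ (-t)) := by
          rw [← ENNReal.ofReal_mul (by positivity), ← rpow_mul hσ0.le, mul_left_comm,
            ← rpow_add hσ0]
          congr 3
          linarith

lemma rpow_neg_le_div_rpow {θ r R t : ℝ} (hθ0 : 0 < θ) (hθ1 : θ < 1) (hr : 0 < r) (hR : 0 < R)
    (hrR : r ≤ R ^ (1 / θ)) (ht : 0 ≤ t) : r ^ (-t) ≤ (R / r) ^ (t / (1 - θ)) := by
  have hθR : r ^ θ ≤ R := calc
    r ^ θ ≤ (R ^ (1 / θ)) ^ θ := rpow_le_rpow hr.le hrR hθ0.le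
    _ = R := by rw [← rpow_mul hR.le, one_div_mul_cancel hθ0.ne', Real.rpow_one]
  calc r ^ (-t) = (r ^ (θ - 1)) ^ (t / (1 - θ)) := by
        rw [← rpow_mul hr.le]
        congr 1
        field_simp [(sub_pos.2 hθ1).ne']
        ring
    _ ≤ (R / r) ^ (t / (1 - θ)) := by
        refine rpow_le_rpow (by positivity) ?_ (div_nonneg ht (sub_pos.2 hθ1).le)
        rwa [rpow_sub_one hr.ne', div_le_div_iff_of_pos_right hr]

end Iteration

section Spectra

variable {X : Type*} [PseudoMetricSpace X]

def assouadSpectrumExponents (θ : ℝ) (F : Set X) : Set ℝ :=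
  {s : ℝ | 0 ≤ s ∧ ∃ C > (0 : ℝ), ∀ R : ℝ, 0 < R → R < 1 → ∀ x ∈ F,
    (coveringNumber (R ^ (1 / θ)) (closedBall x R ∩ F) : ℝ≥0∞)
      ≤ ENNReal.ofReal (C * (R / R ^ (1 / θ)) ^ s)}

def upperSpectrumExponents (θ : ℝ) (F : Set X) : Set ℝ :=
  {s : ℝ | 0 ≤ s ∧ ∃ C > (0 : ℝ), ∀ r R : ℝ, 0 < r → r ≤ R ^ (1 / θ) →
    R ^ (1 / θ) < R → R < 1 → 0 < R → ∀ x ∈ F,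
    (coveringNumber r (closedBall x R ∩ F) : ℝ≥0∞) ≤ ENNReal.ofReal (C * (R / r) ^ s)}

lemma bddBelow_assouadSpectrumExponents (θ : ℝ) (F : Set X) :
    BddBelow (assouadSpectrumExponents θ F) := ⟨0, fun _ hs => hs.1⟩

lemma bddBelow_upperSpectrumExponents (θ : ℝ) (F : Set X) :
    BddBelow (upperSpectrumExponents θ F) := ⟨0, fun _ hs => hs.1⟩

lemma assouadSpectrum_nonneg (θ : ℝ) (F : Set X) : 0 ≤ assouadSpectrum θ F :=
  Real.sInf_nonneg fun _ hs => hs.1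

lemma upperSpectrumExponents_subset_assouadSpectrumExponents {θ' θ : ℝ} (hθ' : 0 < θ')
    (hθ'θ : θ' ≤ θ) (hθ : θ < 1) (F : Set X) :
    upperSpectrumExponents θ F ⊆ assouadSpectrumExponents θ' F := by
  rintro s ⟨hs, C, hC, hbd⟩
  refine ⟨hs, C, hC, fun R hR0 hR1 x hx => hbd _ R (Real.rpow_pos_of_pos hR0 _) ?_ ?_ hR1 hR0 x hx⟩
  · exact Real.rpow_le_rpow_of_exponent_ge hR0 hR1.le (one_div_le_one_div_of_le hθ' hθ'θ)
  · simpa using Real.rpow_lt_rpow_of_exponent_gt hR0 hR1 (one_lt_one_div (hθ'.trans_le hθ'θ) hθ)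

lemma upperSpectrumExponents_anti {θ θ₁ : ℝ} (hθ : 0 < θ) (hθθ₁ : θ ≤ θ₁) (hθ₁ : θ₁ < 1)
    (F : Set X) : upperSpectrumExponents θ₁ F ⊆ upperSpectrumExponents θ F := by
  rintro s ⟨hs, C, hC, hbd⟩
  refine ⟨hs, C, hC, fun r R hr hrR _ hR1 hR0 x hx => hbd r R hr ?_ ?_ hR1 hR0 x hx⟩
  · exact hrR.trans
      (Real.rpow_le_rpow_of_exponent_ge hR0 hR1.le (one_div_le_one_div_of_le hθ hθθ₁))
  · simpa using Real.rpow_lt_rpow_of_exponent_gt hR0 hR1 (one_lt_one_div (hθ.trans_le hθθ₁) hθ₁)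

end Spectra

section SpectraFiniteDimensional

variable {E : Type*} [NormedAddCommGroup E] [NormedSpace ℝ E] [FiniteDimensional ℝ E]

lemma finrank_mem_assouadSpectrumExponents {θ : ℝ} (hθ0 : 0 < θ) (hθ1 : θ ≤ 1) (F : Set E) :
    (finrank ℝ E : ℝ) ∈ assouadSpectrumExponents θ F := by
  refine ⟨Nat.cast_nonneg _, 3 ^ finrank ℝ E, by positivity, fun R hR0 hR1 x _ => ?_⟩
  have hrR : R ^ (1 / θ) ≤ R := by
    simpa using Real.rpow_le_rpow_of_exponent_ge hR0 hR1.le ((one_le_div hθ0).2 hθ1)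
  exact (ENat.toENNReal_le.2 (coveringNumber_mono inter_subset_left)).trans
    (coveringNumber_closedBall_le_rpow x (Real.rpow_pos_of_pos hR0 _) hrR)

lemma finrank_mem_upperSpectrumExponents (θ : ℝ) (F : Set E) :
    (finrank ℝ E : ℝ) ∈ upperSpectrumExponents θ F :=
  ⟨Nat.cast_nonneg _, 3 ^ finrank ℝ E, by positivity, fun _ _ hr hrR hR _ _ x _ =>
    (ENat.toENNReal_le.2 (coveringNumber_mono inter_subset_left)).trans
      (coveringNumber_closedBall_le_rpow x hr (hrR.trans hR.le))⟩

lemma assouadSpectrum_le_finrank {θ : ℝ} (hθ0 : 0 < θ) (hθ1 : θ ≤ 1) (F : Set E) :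
    assouadSpectrum θ F ≤ finrank ℝ E :=
  csInf_le (bddBelow_assouadSpectrumExponents θ F) (finrank_mem_assouadSpectrumExponents hθ0 hθ1 F)

lemma upperSpectrum_le_finrank (θ : ℝ) (F : Set E) : upperSpectrum θ F ≤ finrank ℝ E :=
  csInf_le (bddBelow_upperSpectrumExponents θ F) (finrank_mem_upperSpectrumExponents θ F)

lemma assouadSpectrum_le_upperSpectrum {θ' θ : ℝ} (hθ' : 0 < θ') (hθ'θ : θ' ≤ θ) (hθ : θ < 1)
    (F : Set E) : assouadSpectrum θ' F ≤ upperSpectrum θ F :=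
  csInf_le_csInf (bddBelow_assouadSpectrumExponents θ' F)
    ⟨_, finrank_mem_upperSpectrumExponents θ F⟩
    (upperSpectrumExponents_subset_assouadSpectrumExponents hθ' hθ'θ hθ F)

lemma upperSpectrum_mono {θ θ₁ : ℝ} (hθ : 0 < θ) (hθθ₁ : θ ≤ θ₁) (hθ₁ : θ₁ < 1) (F : Set E) :
    upperSpectrum θ F ≤ upperSpectrum θ₁ F :=
  csInf_le_csInf (bddBelow_upperSpectrumExponents θ F)
    ⟨_, finrank_mem_upperSpectrumExponents θ₁ F⟩ (upperSpectrumExponents_anti hθ hθθ₁ hθ₁ F)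

end SpectraFiniteDimensional

section UpperSpectrumBound

open Real

variable {E : Type*} [NormedAddCommGroup E] [NormedSpace ℝ E] [FiniteDimensional ℝ E]

lemma coveringNumber_le_mul_coveringNumber_rpow {F A : Set E} {θ s C : ℝ} (hθ : 0 < θ)
    (hbd : ∀ R : ℝ, 0 < R → R < 1 → ∀ x ∈ F,
      (coveringNumber (R ^ (1 / θ)) (closedBall x R ∩ F) : ℝ≥0∞)
        ≤ ENNReal.ofReal (C * (R / R ^ (1 / θ)) ^ s))
    (hAF : A ⊆ F) (hA : IsBounded A) {σ : ℝ} (hσ0 : 0 < σ) (hσ1 : σ < 1) :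
    (coveringNumber σ A : ℝ≥0∞)
      ≤ 5 ^ finrank ℝ E * ENNReal.ofReal (C * σ ^ (-((1 - θ) * s)))
        * coveringNumber (σ ^ θ) A := by
  set ρ := σ ^ θ
  have hρ0 : 0 < ρ := rpow_pos_of_pos hσ0 θ
  have hρσ : ρ ^ (1 / θ) = σ := by
    rw [← rpow_mul hσ0.le, mul_one_div_cancel hθ.ne', Real.rpow_one]
  have hM : ∀ z ∈ F, (coveringNumber σ (closedBall z (2 * (ρ / 2)) ∩ F) : ℝ≥0∞)
      ≤ ENNReal.ofReal (C * σ ^ (-((1 - θ) * s))) := by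
    intro z hz
    have hρdiv : ρ / σ = σ ^ (-(1 - θ)) := by
      rw [← rpow_sub_one hσ0.ne']
      ring_nf
    have h := hbd ρ hρ0 (rpow_lt_one hσ0.le hσ1 hθ) z hz
    rwa [hρσ, hρdiv, ← rpow_mul hσ0.le, neg_mul, ← mul_div_cancel₀ ρ two_ne_zero] at h
  obtain ⟨t, ht, hcard⟩ :=
    exists_finset_card_eq_coveringNumber (coveringNumber_ne_top hA (half_pos hρ0))
  calc (coveringNumber σ A : ℝ≥0∞)
      ≤ t.card * ENNReal.ofReal (C * σ ^ (-((1 - θ) * s))) :=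
        coveringNumber_le_card_mul_of_subset hAF ht hM
    _ = coveringNumber (ρ / 2) A * ENNReal.ofReal (C * σ ^ (-((1 - θ) * s))) := by
        rw [← hcard]; rfl
    _ ≤ 5 ^ finrank ℝ E * coveringNumber ρ A * ENNReal.ofReal (C * σ ^ (-((1 - θ) * s))) := by
        gcongr
        exact coveringNumber_half_le A hρ0
    _ = _ := by ring

lemma le_rpow_neg_of_le_rpow_neg_inv {K η σ : ℝ} (hK : 0 < K) (hη : 0 < η) (hσ0 : 0 < σ)
    (hσ : σ ≤ K ^ (-η⁻¹)) : K ≤ σ ^ (-η) := calc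
  K = (K ^ (-η⁻¹)) ^ (-η) := by
    rw [← rpow_mul hK.le, neg_mul_neg, inv_mul_cancel₀ hη.ne', Real.rpow_one]
  _ ≤ σ ^ (-η) := rpow_le_rpow_of_nonpos hσ0 hσ (neg_nonpos.2 hη.le)

lemma exists_coveringNumber_closedBall_inter_le {θ s δ : ℝ} (hθ0 : 0 < θ) (hθ1 : θ < 1)
    {F : Set E} (hs : s ∈ assouadSpectrumExponents θ F) (hδ : 0 < δ) :
    ∃ A > 0, ∀ x ∈ F, ∀ σ : ℝ, 0 < σ → σ < 1 →
      (coveringNumber σ (closedBall x 1 ∩ F) : ℝ≥0∞) ≤ ENNReal.ofReal (A * σ ^ (-(s + δ))) := by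
  obtain ⟨hs0, C, -, hbd⟩ := hs
  set K := max (5 ^ finrank ℝ E * C) 1
  set η := δ * (1 - θ)
  have hη : 0 < η := mul_pos hδ (sub_pos.2 hθ1)
  set c := min (1 / 2) (K ^ (-η⁻¹))
  have hc0 : 0 < c := lt_min one_half_pos (rpow_pos_of_pos (by positivity) _)
  have hc1 : c < 1 := (min_le_left _ _).trans_lt one_half_lt_one
  have hp : 0 ≤ (1 - θ) * s + η := by nlinarith
  have hexp : ((1 - θ) * s + η) / (1 - θ) = s + δ := by
    field_simp [(sub_pos.2 hθ1).ne']
    ring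
  refine ⟨(2 / c + 1) ^ finrank ℝ E, by positivity, fun x _ => ?_⟩
  rw [← hexp]
  refine le_ofReal_mul_rpow_of_le_rpow_mul_comp hθ0 hθ1 hc0 hc1 hp (by positivity)
    (fun σ hcσ _ => ?_) (fun σ hσ0 hσc => ?_)
  · have hσ0 := hc0.trans_le hcσ
    refine (ENat.toENNReal_le.2 (coveringNumber_mono inter_subset_left)).trans
      ((coveringNumber_closedBall_le x hσ0 zero_le_one).trans (ENNReal.ofReal_le_ofReal ?_))
    rw [mul_one]
    gcongr
  · refine (coveringNumber_le_mul_coveringNumber_rpow hθ0 hbd inter_subset_right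
      (isBounded_closedBall.subset inter_subset_left) hσ0 (hσc.trans hc1)).trans ?_
    rw [← ENNReal.ofReal_ofNat 5, ← ENNReal.ofReal_pow (by norm_num),
      ← ENNReal.ofReal_mul (by positivity)]
    gcongr
    have hK : 5 ^ finrank ℝ E * C ≤ σ ^ (-η) :=
      (le_max_left _ _).trans (le_rpow_neg_of_le_rpow_neg_inv (by positivity) hη hσ0
        (hσc.le.trans (min_le_right _ _)))
    calc (5 : ℝ) ^ finrank ℝ E * (C * σ ^ (-((1 - θ) * s)))
        = 5 ^ finrank ℝ E * C * σ ^ (-((1 - θ) * s)) := by ring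
      _ ≤ σ ^ (-η) * σ ^ (-((1 - θ) * s)) := by gcongr
      _ = σ ^ (-((1 - θ) * s + η)) := by rw [← rpow_add hσ0]; ring_nf

lemma div_one_sub_mem_upperSpectrumExponents {θ θ' s δ : ℝ} (hθ0 : 0 < θ) (hθ1 : θ < 1)
    (hθ'0 : 0 < θ') (hθ'1 : θ' < 1) {F : Set E} (hs : s ∈ assouadSpectrumExponents θ' F)
    (hδ : 0 < δ) : (s + δ) / (1 - θ) ∈ upperSpectrumExponents θ F := by
  obtain ⟨A, hA0, hA⟩ := exists_coveringNumber_closedBall_inter_le hθ'0 hθ'1 hs hδ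
  have hsδ : 0 ≤ s + δ := by linarith [hs.1]
  refine ⟨div_nonneg hsδ (sub_pos.2 hθ1).le, A, hA0, fun r R hr hrR hRR hR1 hR0 x hx => ?_⟩
  calc (coveringNumber r (closedBall x R ∩ F) : ℝ≥0∞)
      ≤ coveringNumber r (closedBall x 1 ∩ F) := ENat.toENNReal_le.2 <|
        coveringNumber_mono (inter_subset_inter_left _ (closedBall_subset_closedBall hR1.le))
    _ ≤ ENNReal.ofReal (A * r ^ (-(s + δ))) := hA x hx r hr (hrR.trans_lt (hRR.trans hR1))
    _ ≤ ENNReal.ofReal (A * (R / r) ^ ((s + δ) / (1 - θ))) := by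
        gcongr
        exact rpow_neg_le_div_rpow hθ0 hθ1 hr hR0 hrR hsδ

lemma upperSpectrum_mul_one_sub_le_assouadSpectrum {θ θ' : ℝ} (hθ0 : 0 < θ) (hθ1 : θ < 1)
    (hθ'0 : 0 < θ') (hθ'1 : θ' < 1) (F : Set E) :
    upperSpectrum θ F * (1 - θ) ≤ assouadSpectrum θ' F := by
  refine le_csInf ⟨_, finrank_mem_assouadSpectrumExponents hθ'0 hθ'1.le F⟩ fun s hs => ?_
  refine le_of_forall_pos_le_add fun δ hδ => ?_
  rw [← le_div_iff₀ (sub_pos.2 hθ1)]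
  exact csInf_le (bddBelow_upperSpectrumExponents θ F)
    (div_one_sub_mem_upperSpectrumExponents hθ0 hθ1 hθ'0 hθ'1 hs hδ)

end UpperSpectrumBound

/-- For `θ ∈ (0,1)` and `F ⊆ ℝ^d`:
`\overline{dim}_{GB} F ≤ \overline{dim}_A^θ F ≤ min (\overline{dim}_{GB} F / (1-θ)) (dim_{qA} F)`. -/
theorem genUpperBoxDim_le_upperSpectrum_le_min
    (d : ℕ) (θ : ℝ) (hθ : θ ∈ Set.Ioo (0 : ℝ) 1) (F : Set (EuclideanSpace ℝ (Fin d))) :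
    genUpperBoxDim F ≤ upperSpectrum θ F ∧
      upperSpectrum θ F ≤ min (genUpperBoxDim F / (1 - θ)) (quasiAssouadDim F) := by
  obtain ⟨hθ0, hθ1⟩ := hθ
  have hIoo : ∀ᶠ θ' in 𝓝[>] (0 : ℝ), θ' ∈ Ioo (0 : ℝ) 1 := Ioo_mem_nhdsGT one_pos
  refine ⟨?_, le_min ?_ ?_⟩
  · exact limsup_le_of_le (isCoboundedUnder_le_of_le _ fun θ' => assouadSpectrum_nonneg θ' F)
      (eventually_of_mem (Ioo_mem_nhdsGT hθ0) fun θ' h =>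
        assouadSpectrum_le_upperSpectrum h.1 h.2.le hθ1 F)
  · rw [le_div_iff₀ (sub_pos.2 hθ1)]
    exact le_limsup_of_frequently_le
      (hIoo.mono fun θ' h =>
        upperSpectrum_mul_one_sub_le_assouadSpectrum hθ0 hθ1 h.1 h.2 F).frequently
      (isBoundedUnder_of_eventually_le
        (hIoo.mono fun θ' h => assouadSpectrum_le_finrank h.1 h.2.le F))
  · exact le_limsup_of_frequently_le
      (eventually_of_mem (Ioo_mem_nhdsLT hθ1) fun θ₁ h =>
        upperSpectrum_mono hθ0 h.1.le h.2 F).frequently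
      (isBoundedUnder_of_eventually_le
        (Eventually.of_forall fun θ₁ => upperSpectrum_le_finrank θ₁ F))
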